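/- Strain error estimate, case h₀ = 1: for every p ∈ [1,∞], the relative error ‖u^{scb}-u^a‖_{ℓ^p}/‖u^a‖_{ℓ^p} in the linearized 1D model satisfies Err_p = 2^{1/p}e^{-α} + O(e^{-2α}) as α → ∞. -/

import Mathlib

/-!
Write `ε = e^{-α}` and `sᵣ = e^{-α(r - r₀)}`, so that `φ = s² - 2s - φ₀`, `φ'(r) = 2α(sᵣ - sᵣ²)`
and `φ''(r) = 2α²(2sᵣ² - sᵣ)`; the choice of `r₀` makes `s₁ = (1 + 2ε)/(1 + 2ε²) = 1 + O(ε)`, and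
`s₂ = s₁ε`. Dividing the characteristic equation `aλ + b(1 + λ)² = 0` by `2α²s₁` gives
`(2s₁ - 1)λ = ε(1 - 2s₁ε)(1 + λ)²`, hence `λ = ε + O(ε²)`.

With `K = c/(a + b(1 + λ))` the atomistic strain is `Kλ^ℓ`, and the error `uˢᶜᵇ - uᵃ` is `-Kλ^ℓ`
except at `ℓ = 0`, where the characteristic equation turns it into `Kλw` with
`w = (1 - λ)/(1 + λ²)`. Summing geometric series, the relative error is exactly
`λ (w^p (1 - λ^p) + 1)^{1/p}` in `ℓ^p` and `λ` in `ℓ^∞`; as `w = 1 - O(λ)` and `λ^p ≤ λ`, the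
bracket is `2 - O(λ)`, which produces the factor `2^{1/p}`.
-/

noncomputable def morseR0 (α : ℝ) : ℝ :=
  1 + (1 / α) * Real.log ((1 + 2 * Real.exp (-α)) / (1 + 2 * Real.exp (-2 * α)))

noncomputable def morse (α φ₀ : ℝ) (r : ℝ) : ℝ :=
  Real.exp (-2 * α * (r - morseR0 α)) - 2 * Real.exp (-α * (r - morseR0 α)) - φ₀

open Real

lemma exp_neg_two_mul_eq_sq (x : ℝ) : exp (-2 * x) = exp (-x) ^ 2 := by
  rw [← exp_nat_mul]; push_cast; ring_nf

lemma exp_neg_le_one_seventh {α : ℝ} (hα : 2 ≤ α) : exp (-α) ≤ 1 / 7 := by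
  have h7 : 7 ≤ exp 2 := by
    rw [show (2 : ℝ) = 1 + 1 by norm_num, exp_add]
    nlinarith [exp_one_gt_d9]
  calc exp (-α) ≤ exp (-2) := exp_le_exp.2 (by linarith)
    _ = (exp 2)⁻¹ := exp_neg 2
    _ ≤ 1 / 7 := by rw [one_div]; exact inv_anti₀ (by norm_num) h7

section Morse

variable {α : ℝ}

noncomputable def morseExp (α r : ℝ) : ℝ := exp (-α * (r - morseR0 α))

lemma morse_eq_morseExp (α φ₀ : ℝ) :
    morse α φ₀ = fun r => morseExp α r ^ 2 - 2 * morseExp α r - φ₀ := by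
  funext r
  rw [morse, morseExp, ← exp_nat_mul]
  push_cast
  ring_nf

lemma hasDerivAt_morseExp (α r : ℝ) :
    HasDerivAt (morseExp α) (-α * morseExp α r) r :=
  (((hasDerivAt_id r).sub_const (morseR0 α)).const_mul (-α)).exp.congr_deriv
    (by rw [morseExp, id]; ring)

lemma deriv_morse (α φ₀ : ℝ) :
    deriv (morse α φ₀) = fun r => 2 * α * (morseExp α r - morseExp α r ^ 2) := by
  funext r
  rw [morse_eq_morseExp]
  have h := hasDerivAt_morseExp α r
  exact (((h.pow 2).sub (h.const_mul 2)).sub_const φ₀).deriv.trans (by ring)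

lemma deriv_deriv_morse (α φ₀ r : ℝ) :
    deriv (deriv (morse α φ₀)) r = 2 * α ^ 2 * (2 * morseExp α r ^ 2 - morseExp α r) := by
  rw [deriv_morse]
  have h := hasDerivAt_morseExp α r
  exact ((h.sub (h.pow 2)).const_mul (2 * α)).deriv.trans (by ring)

lemma morseExp_one (hα : α ≠ 0) :
    morseExp α 1 = (1 + 2 * exp (-α)) / (1 + 2 * exp (-α) ^ 2) := by
  have hpos : 0 < (1 + 2 * exp (-α)) / (1 + 2 * exp (-α) ^ 2) := by positivity
  have hexponent : -α * (1 - morseR0 α) = log ((1 + 2 * exp (-α)) / (1 + 2 * exp (-α) ^ 2)) := by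
    rw [morseR0, exp_neg_two_mul_eq_sq]
    field_simp
    ring
  rw [morseExp, hexponent, exp_log hpos]

lemma morseExp_two (α : ℝ) : morseExp α 2 = morseExp α 1 * exp (-α) := by
  rw [morseExp, morseExp, ← exp_add]; ring_nf

lemma morseExp_one_mem_Icc (hα : 0 < α) : morseExp α 1 ∈ Set.Icc 1 (1 + 2 * exp (-α)) := by
  have hε : exp (-α) ≤ 1 := exp_le_one_iff.2 (by linarith)
  have hε0 := exp_pos (-α)
  rw [Set.mem_Icc, morseExp_one hα.ne', le_div_iff₀ (by positivity), div_le_iff₀ (by positivity)]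
  constructor <;> nlinarith

lemma morseExp_two_lt_half (hα : 2 ≤ α) : morseExp α 2 < 1 / 2 := by
  have hε := exp_neg_le_one_seventh hα
  have hε0 := exp_pos (-α)
  have hS := (morseExp_one_mem_Icc (by linarith : 0 < α)).2
  rw [morseExp_two]
  nlinarith

end Morse

section GeometricSequence

variable {M lam p : ℝ}

lemma hasSum_rpow_geometric (hM : 0 ≤ M) (h0 : 0 ≤ lam) (h1 : lam < 1) (hp : 0 < p) :
    HasSum (fun ℓ : ℕ => (M * lam ^ ℓ) ^ p) (M ^ p / (1 - lam ^ p)) := by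
  have hterm (ℓ : ℕ) : (M * lam ^ ℓ) ^ p = M ^ p * (lam ^ p) ^ ℓ := by
    rw [Real.mul_rpow hM (pow_nonneg h0 ℓ), ← Real.rpow_natCast, ← Real.rpow_natCast,
      ← Real.rpow_mul h0, ← Real.rpow_mul h0, mul_comm p]
  simpa only [hterm, div_eq_mul_inv] using
    (hasSum_geometric_of_lt_one (Real.rpow_nonneg h0 p) (Real.rpow_lt_one h0 h1 hp)).mul_left
      (M ^ p)

lemma hasSum_rpow_geometric_update (hM : 0 ≤ M) (h0 : 0 ≤ lam) (h1 : lam < 1) (hp : 0 < p)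
    (d : ℝ) :
    HasSum (fun ℓ : ℕ => (if ℓ = 0 then d else M * lam ^ ℓ) ^ p)
      (d ^ p - M ^ p + M ^ p / (1 - lam ^ p)) := by
  have h := (hasSum_rpow_geometric hM h0 h1 hp).update 0 (d ^ p)
  simp only [pow_zero, mul_one] at h
  refine h.congr_fun fun ℓ => ?_
  rcases eq_or_ne ℓ 0 with rfl | hℓ
  · simp
  · simp [hℓ]

lemma lp_ratio_geometric_update (hM : 0 < M) (h0 : 0 ≤ lam) (h1 : lam < 1) (hp : 0 < p)
    {w : ℝ} (hw : 0 ≤ w) :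
    (∑' ℓ : ℕ, (if ℓ = 0 then M * (lam * w) else M * lam ^ ℓ) ^ p) ^ (1 / p) /
        (∑' ℓ : ℕ, (M * lam ^ ℓ) ^ p) ^ (1 / p)
      = lam * (w ^ p * (1 - lam ^ p) + 1) ^ (1 / p) := by
  have hq : 0 < 1 - lam ^ p := sub_pos.2 (Real.rpow_lt_one h0 h1 hp)
  have hMp : 0 < M ^ p := Real.rpow_pos_of_pos hM p
  have hB : 0 ≤ w ^ p * (1 - lam ^ p) + 1 := by
    have := Real.rpow_nonneg hw p; positivity
  have hnum : 0 ≤ (M * (lam * w)) ^ p - M ^ p + M ^ p / (1 - lam ^ p) := by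
    have := le_div_self hMp.le hq (by linarith [Real.rpow_nonneg h0 p])
    linarith [Real.rpow_nonneg (mul_nonneg hM.le (mul_nonneg h0 hw)) p]
  have hratio : ((M * (lam * w)) ^ p - M ^ p + M ^ p / (1 - lam ^ p)) / (M ^ p / (1 - lam ^ p))
      = lam ^ p * (w ^ p * (1 - lam ^ p) + 1) := by
    rw [Real.mul_rpow hM.le (mul_nonneg h0 hw), Real.mul_rpow h0 hw]
    field_simp
    ring
  rw [(hasSum_rpow_geometric_update hM.le h0 h1 hp _).tsum_eq,
    (hasSum_rpow_geometric hM.le h0 h1 hp).tsum_eq,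
    ← Real.div_rpow hnum (by positivity), hratio,
    Real.mul_rpow (Real.rpow_nonneg h0 p) hB, one_div, Real.rpow_rpow_inv h0 hp.ne']

lemma ciSup_geometric (hM : 0 ≤ M) (h0 : 0 ≤ lam) (h1 : lam ≤ 1) :
    ⨆ ℓ : ℕ, M * lam ^ ℓ = M := by
  have hle (ℓ : ℕ) : M * lam ^ ℓ ≤ M := mul_le_of_le_one_right hM (pow_le_one₀ h0 h1)
  refine le_antisymm (ciSup_le hle) ?_
  simpa using le_ciSup ⟨M, Set.forall_mem_range.2 hle⟩ 0

lemma ciSup_geometric_update (hM : 0 ≤ M) (h0 : 0 ≤ lam) (h1 : lam ≤ 1) {w : ℝ} (hw : w ≤ 1) :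
    ⨆ ℓ : ℕ, (if ℓ = 0 then M * (lam * w) else M * lam ^ ℓ) = M * lam := by
  have hle (ℓ : ℕ) : (if ℓ = 0 then M * (lam * w) else M * lam ^ ℓ) ≤ M * lam := by
    rcases ℓ with _ | ℓ
    · simpa using mul_le_mul_of_nonneg_left (mul_le_of_le_one_right h0 hw) hM
    · simpa [pow_succ] using mul_le_mul_of_nonneg_left
        (mul_le_of_le_one_left h0 (pow_le_one₀ h0 h1)) hM
  refine le_antisymm (ciSup_le hle) ?_
  simpa using le_ciSup ⟨M * lam, Set.forall_mem_range.2 hle⟩ 1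

lemma sup_ratio_geometric_update (hM : 0 < M) (h0 : 0 ≤ lam) (h1 : lam ≤ 1) {w : ℝ}
    (hw : w ≤ 1) :
    (⨆ ℓ : ℕ, (if ℓ = 0 then M * (lam * w) else M * lam ^ ℓ)) / ⨆ ℓ : ℕ, M * lam ^ ℓ = lam := by
  rw [ciSup_geometric_update hM.le h0 h1 hw, ciSup_geometric hM.le h0 h1,
    mul_div_cancel_left₀ _ hM.ne']

end GeometricSequence

section LinearizedModel

variable {a b c lam : ℝ}

lemma atom_denom_ne_zero (hb : b ≠ 0) (h0 : 0 < lam)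
    (hq : b * lam ^ 2 + (a + 2 * b) * lam + b = 0) : a + b * (1 + lam) ≠ 0 := by
  intro h
  have h1 : 1 + lam ≠ 0 := by positivity
  exact mul_ne_zero hb h1 (by linear_combination hq - lam * h)

lemma scb_sub_atom_zero (hb : b ≠ 0) (h0 : 0 < lam)
    (hq : b * lam ^ 2 + (a + 2 * b) * lam + b = 0) :
    c / (a + 2 * b) - c / (a + b * (1 + lam))
      = c / (a + b * (1 + lam)) * (lam * ((1 - lam) / (1 + lam ^ 2))) := by
  have h1 : a + b * (1 + lam) = -(b * (1 + lam)) / lam := by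
    rw [eq_div_iff h0.ne']; linear_combination hq
  have h2 : a + 2 * b = -(b * (1 + lam ^ 2)) / lam := by
    rw [eq_div_iff h0.ne']; linear_combination hq
  have : 1 + lam ≠ 0 := by positivity
  rw [h1, h2]
  field_simp
  ring

lemma abs_atom (h0 : 0 ≤ lam) (ℓ : ℕ) :
    |c * lam ^ ℓ / (a + b * (1 + lam))| = |c / (a + b * (1 + lam))| * lam ^ ℓ := by
  rw [mul_div_right_comm, abs_mul, abs_of_nonneg (pow_nonneg h0 ℓ)]

lemma abs_scb_sub_atom (hb : b ≠ 0) (h0 : 0 < lam) (h1 : lam ≤ 1)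
    (hq : b * lam ^ 2 + (a + 2 * b) * lam + b = 0) (ℓ : ℕ) :
    |(if ℓ = 0 then c / (a + 2 * b) else 0) - c * lam ^ ℓ / (a + b * (1 + lam))|
      = if ℓ = 0 then |c / (a + b * (1 + lam))| * (lam * ((1 - lam) / (1 + lam ^ 2)))
        else |c / (a + b * (1 + lam))| * lam ^ ℓ := by
  rcases eq_or_ne ℓ 0 with rfl | hℓ
  · rw [if_pos rfl, if_pos rfl, pow_zero, mul_one, scb_sub_atom_zero hb h0 hq, abs_mul,
      abs_of_nonneg (mul_nonneg h0.le (div_nonneg (sub_nonneg.2 h1) (by positivity)))]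
  · rw [if_neg hℓ, if_neg hℓ, zero_sub, abs_neg, abs_atom h0.le]

variable {p : ℝ}

lemma lp_relative_error (hb : b ≠ 0) (hc : c ≠ 0) (h0 : 0 < lam) (h1 : lam < 1)
    (hq : b * lam ^ 2 + (a + 2 * b) * lam + b = 0) (hp : 0 < p) :
    (∑' ℓ : ℕ, |(if ℓ = 0 then c / (a + 2 * b) else 0) - c * lam ^ ℓ / (a + b * (1 + lam))| ^ p)
          ^ (1 / p) / (∑' ℓ : ℕ, |c * lam ^ ℓ / (a + b * (1 + lam))| ^ p) ^ (1 / p)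
      = lam * (((1 - lam) / (1 + lam ^ 2)) ^ p * (1 - lam ^ p) + 1) ^ (1 / p) := by
  simp_rw [abs_scb_sub_atom hb h0 h1.le hq, abs_atom h0.le]
  exact lp_ratio_geometric_update (abs_pos.2 (div_ne_zero hc (atom_denom_ne_zero hb h0 hq)))
    h0.le h1 hp (div_nonneg (sub_nonneg.2 h1.le) (by positivity))

lemma sup_relative_error (hb : b ≠ 0) (hc : c ≠ 0) (h0 : 0 < lam) (h1 : lam < 1)
    (hq : b * lam ^ 2 + (a + 2 * b) * lam + b = 0) :
    (⨆ ℓ : ℕ, |(if ℓ = 0 then c / (a + 2 * b) else 0) - c * lam ^ ℓ / (a + b * (1 + lam))|) /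
        (⨆ ℓ : ℕ, |c * lam ^ ℓ / (a + b * (1 + lam))|) = lam := by
  simp_rw [abs_scb_sub_atom hb h0 h1.le hq, abs_atom h0.le]
  exact sup_ratio_geometric_update (abs_pos.2 (div_ne_zero hc (atom_denom_ne_zero hb h0 hq)))
    h0.le h1.le (div_le_one_of_le₀ (by nlinarith) (by positivity))

end LinearizedModel

section Asymptotics

variable {p lam ε : ℝ}

lemma root_asymptotics {S : ℝ} (hS1 : 1 ≤ S) (hS2 : S ≤ 1 + 2 * ε) (hε : 0 < ε)
    (hε7 : ε ≤ 1 / 7) (h0 : 0 < lam) (h1 : lam < 1)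
    (hroot : (2 * S - 1) * lam = ε * (1 - 2 * S * ε) * (1 + lam) ^ 2) :
    lam ≤ 4 * ε ∧ |lam - ε| ≤ 20 * ε ^ 2 := by
  have hSε : S * ε ≤ 1 / 5 := by nlinarith
  have hpos : 0 < 1 - 2 * S * ε := by nlinarith
  have hlam : lam ≤ (2 * S - 1) * lam := by nlinarith
  have hrhs : ε * (1 - 2 * S * ε) * (1 + lam) ^ 2 ≤ ε * (1 + lam) ^ 2 := by
    nlinarith [mul_nonneg (mul_nonneg (mul_nonneg hε.le (by linarith : (0:ℝ) ≤ S)) hε.le)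
      (sq_nonneg (1 + lam))]
  have hε3 : ε ^ 3 ≤ (1 / 7) * ε ^ 2 := by nlinarith
  have hl4 : lam ≤ 4 * ε := by
    nlinarith [mul_nonneg hε.le (by nlinarith : (0:ℝ) ≤ 4 - (1 + lam) ^ 2)]
  refine ⟨hl4, abs_le.2 ⟨?_, ?_⟩⟩
  · rcases le_or_gt ε lam with h | h
    · nlinarith
    · have hC : ε * (1 - 2 * S * ε) ≤ (2 * S - 1) * lam := by
        nlinarith [mul_nonneg (mul_nonneg hε.le hpos.le) (by nlinarith : (0:ℝ) ≤ (1 + lam) ^ 2 - 1)]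
      have hD : ε - lam ≤ (2 * S - 1) * (ε - lam) := by
        nlinarith [mul_nonneg (by linarith : (0:ℝ) ≤ 2 * S - 2) (by linarith : (0:ℝ) ≤ ε - lam)]
      have hE : 0 ≤ ε * (4 * ε - (2 * S - 2)) :=
        mul_nonneg hε.le (by linarith : (0:ℝ) ≤ 4 * ε - (2 * S - 2))
      have hB : ε * (S * ε) ≤ ε * ((1 + 2 * ε) * ε) :=
        mul_le_mul_of_nonneg_left (mul_le_mul_of_nonneg_right hS2 hε.le) hε.le
      nlinarith
  · nlinarith [mul_nonneg hε.le (by nlinarith : (0:ℝ) ≤ (1 + 4 * ε) ^ 2 - (1 + lam) ^ 2)]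

lemma rpow_weight_bounds (hp : 1 ≤ p) (h0 : 0 < lam) (h1 : lam < 1) :
    1 ≤ ((1 - lam) / (1 + lam ^ 2)) ^ p * (1 - lam ^ p) + 1 ∧
    ((1 - lam) / (1 + lam ^ 2)) ^ p * (1 - lam ^ p) + 1 ≤ 2 ∧
    2 - (((1 - lam) / (1 + lam ^ 2)) ^ p * (1 - lam ^ p) + 1) ≤ (1 + 2 * p) * lam := by
  have hp0 : 0 < p := by linarith
  set w := (1 - lam) / (1 + lam ^ 2) with hw
  have hden : 0 < 1 + lam ^ 2 := by positivity
  have hw0 : 0 < w := div_pos (by linarith) hden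
  have hw1 : w ≤ 1 := by rw [div_le_one hden]; nlinarith
  have hwlam : 1 - w ≤ 2 * lam := by
    rw [hw, one_sub_div hden.ne', div_le_iff₀ hden]; nlinarith
  have hwp0 : 0 < w ^ p := Real.rpow_pos_of_pos hw0 p
  have hwp1 : w ^ p ≤ 1 := Real.rpow_le_one hw0.le hw1 hp0.le
  have hlp0 : 0 < lam ^ p := Real.rpow_pos_of_pos h0 p
  have hlp1 : lam ^ p < 1 := Real.rpow_lt_one h0.le h1 hp0
  have hlpl : lam ^ p ≤ lam := by
    simpa using Real.rpow_le_rpow_of_exponent_ge h0 h1.le hp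
  have hbern : 1 + p * (w - 1) ≤ w ^ p := by
    simpa using one_add_mul_self_le_rpow_one_add (s := w - 1) (by linarith) hp
  refine ⟨by nlinarith, by nlinarith, ?_⟩
  nlinarith [mul_nonneg hwp0.le hlp0.le]

lemma abs_mul_rpow_sub_two_rpow_le {B : ℝ} (hp : 1 ≤ p) (hε : 0 < ε)
    (hB1 : 1 ≤ B) (hB2 : B ≤ 2) (h2B : 2 - B ≤ (1 + 2 * p) * lam) (hle : lam ≤ 4 * ε)
    (hclose : |lam - ε| ≤ 20 * ε ^ 2) :
    |lam * B ^ (1 / p) - 2 ^ (1 / p) * ε| ≤ (44 + 8 * p) * ε ^ 2 := by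
  have hp0 : 0 < p := by linarith
  have hip : 1 / p ≤ 1 := by rw [div_le_one hp0]; exact hp
  have hip0 : 0 < 1 / p := by positivity
  set X := B ^ (1 / p) with hX
  set T := (2 : ℝ) ^ (1 / p) with hT
  have hX1 : 1 ≤ X := Real.one_le_rpow hB1 hip0.le
  have hXT : X ≤ T := Real.rpow_le_rpow (by linarith) hB2 hip0.le
  have hT2 : T ≤ 2 := by
    simpa [hT] using Real.rpow_le_rpow_of_exponent_le one_le_two hip
  -- `x ↦ x ^ (1 / p)` is concave, so on `[1, 2]` it moves at most as fast as the identity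
  have hgap : T - X ≤ 2 - B := by
    have hmul : X = T * (B / 2) ^ (1 / p) := by
      rw [hX, hT, ← Real.mul_rpow (by norm_num) (by linarith)]
      ring_nf
    have hge : B / 2 ≤ (B / 2) ^ (1 / p) := by
      simpa using Real.rpow_le_rpow_of_exponent_ge (x := B / 2) (by linarith) (by linarith) hip
    have hle1 : (B / 2) ^ (1 / p) ≤ 1 := Real.rpow_le_one (by linarith) (by linarith) hip0.le
    nlinarith [Real.rpow_pos_of_pos (show (0:ℝ) < 2 by norm_num) (1 / p)]
  obtain ⟨hc1, hc2⟩ := abs_le.1 hclose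
  have hkey1 : X * (lam - ε) ≤ 40 * ε ^ 2 := by nlinarith
  have hkey2 : X * (ε - lam) ≤ 40 * ε ^ 2 := by nlinarith
  have hkey3 : ε * (T - X) ≤ (1 + 2 * p) * (4 * ε ^ 2) := by
    nlinarith [mul_le_mul_of_nonneg_left hgap hε.le, mul_le_mul_of_nonneg_left h2B hε.le,
      mul_nonneg (mul_nonneg (by linarith : (0:ℝ) ≤ 1 + 2 * p) hε.le)
        (by linarith : (0:ℝ) ≤ 4 * ε - lam)]
  rw [abs_le]
  constructor <;> nlinarith [mul_nonneg hε.le (sub_nonneg.2 hXT)]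

end Asymptotics

lemma morse_root_asymptotics {α φ₀ lam : ℝ} (hα : 2 ≤ α) (h0 : 0 < lam) (h1 : lam < 1)
    (hq : deriv (deriv (morse α φ₀)) 2 * lam ^ 2 +
      (deriv (deriv (morse α φ₀)) 1 + 2 * deriv (deriv (morse α φ₀)) 2) * lam +
        deriv (deriv (morse α φ₀)) 2 = 0) :
    lam ≤ 4 * exp (-α) ∧ |lam - exp (-α)| ≤ 20 * exp (-α) ^ 2 := by
  obtain ⟨hS1, hS2⟩ := morseExp_one_mem_Icc (by linarith : 0 < α)
  refine root_asymptotics hS1 hS2 (exp_pos _) (exp_neg_le_one_seventh hα) h0 h1 ?_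
  rw [deriv_deriv_morse, deriv_deriv_morse, morseExp_two] at hq
  have hα0 : α ≠ 0 := by linarith
  have hscale : 2 * α ^ 2 * morseExp α 1 ≠ 0 := by positivity
  apply mul_left_cancel₀ hscale
  linear_combination hq

/-- strain error for h₀ = 1: for every p ∈ [1,∞],
Err_p = 2^{1/p} e^{-α} + O(e^{-2α}) as α → ∞ (p = ∞ is the sup-norm case, 2^{1/∞} = 1). -/
theorem stmt_14 (φ₀ : ℝ) (p : ℝ) (hp : 1 ≤ p) :
    ∃ C α₀ : ℝ, 0 < C ∧ 0 < α₀ ∧ ∀ α : ℝ, α₀ ≤ α →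
      ∀ lam : ℝ, lam ∈ Set.Ioo (0 : ℝ) 1 →
        (let a : ℝ := deriv (deriv (morse α φ₀)) 1
         let b : ℝ := deriv (deriv (morse α φ₀)) 2
         let c : ℝ := deriv (morse α φ₀) 2
         b * lam ^ 2 + (a + 2 * b) * lam + b = 0 →
         (let ua : ℕ → ℝ := fun ℓ => c * lam ^ ℓ / (a + b * (1 + lam))
          let uscb : ℕ → ℝ := fun ℓ => if ℓ = 0 then c / (a + 2 * b) else 0
          abs ((∑' ℓ : ℕ, |uscb ℓ - ua ℓ| ^ p) ^ (1 / p) / (∑' ℓ : ℕ, |ua ℓ| ^ p) ^ (1 / p)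
              - 2 ^ (1 / p) * Real.exp (-α)) ≤ C * Real.exp (-2 * α) ∧
          abs ((⨆ ℓ : ℕ, |uscb ℓ - ua ℓ|) / (⨆ ℓ : ℕ, |ua ℓ|)
              - Real.exp (-α)) ≤ C * Real.exp (-2 * α))) := by
  refine ⟨44 + 8 * p, 2, by linarith, two_pos, fun α hα lam ⟨h0, h1⟩ => ?_⟩
  intro a b c hq
  have hs0 : 0 < morseExp α 2 := exp_pos _
  have hs := morseExp_two_lt_half hα
  have hα0 : α ≠ 0 := by linarith
  have hb : b ≠ 0 := by
    rw [show b = _ from deriv_deriv_morse α φ₀ 2]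
    exact mul_ne_zero (by positivity) (by nlinarith)
  have hc : c ≠ 0 := by
    rw [show c = _ from congrFun (deriv_morse α φ₀) 2]
    exact mul_ne_zero (by positivity) (by nlinarith)
  obtain ⟨hle, hclose⟩ := morse_root_asymptotics hα h0 h1 hq
  obtain ⟨hB1, hB2, hB⟩ := rpow_weight_bounds hp h0 h1
  dsimp only
  rw [lp_relative_error hb hc h0 h1 hq (by linarith), sup_relative_error hb hc h0 h1 hq,
    exp_neg_two_mul_eq_sq]
  exact ⟨abs_mul_rpow_sub_two_rpow_le hp (exp_pos _) hB1 hB2 hB hle hclose,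
    hclose.trans (mul_le_mul_of_nonneg_right (by linarith) (sq_nonneg _))⟩
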